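/- For a real number a > 0 and real ξ, ∫_{-∞}^{∞} |Γ(a + it)|² e^{-iξt} dt = √π Γ(a) Γ(a + 1/2) (cosh(ξ/2))^{-2a}. -/

import Mathlib

/-!
Euler's Beta integral gives `Γ(a + it) Γ(a - it) = Γ(2a) B(a + it, a - it)`, and the substitution
`x = σ(s)` with the logistic function `σ` turns `B(a + it, a - it)` into `∫ e^{its} w(s)^a ds`,
where `w = σ (1 - σ) = (2 cosh (s / 2))⁻²`. So `|Γ(a + it)|² / Γ(2a)` is the Fourier transform
of `w^a` in angular frequency, and Fourier inversion returns `2π Γ(2a) w(ξ)^a`; Legendre's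
duplication formula rewrites the constant. Inversion needs the transform to be integrable: `w^a`
has two integrable derivatives, so its transform at frequency `ν` is `O((1 + ν²)⁻¹)`.
-/

open Complex Real MeasureTheory

open scoped FourierTransform

section Fourier

variable {E : Type*} [NormedAddCommGroup E] [NormedSpace ℂ E]

theorem Real.norm_fourier_le_integral_norm (f : ℝ → E) (w : ℝ) : ‖𝓕 f w‖ ≤ ∫ x, ‖f x‖ :=
  VectorFourier.norm_fourierIntegral_le_integral_norm _ _ _ _ _

theorem Real.one_add_sq_mul_norm_fourier_le {f : ℝ → E} (hf : Integrable f)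
    (hf' : Differentiable ℝ f) (hf'i : Integrable (deriv f))
    (hf'' : Differentiable ℝ (deriv f)) (hf''i : Integrable (deriv (deriv f))) (w : ℝ) :
    (1 + (2 * π * w) ^ 2) * ‖𝓕 f w‖ ≤ (∫ x, ‖f x‖) + ∫ x, ‖deriv (deriv f) x‖ := by
  have hnorm : ‖𝓕 (deriv (deriv f)) w‖ = (2 * π * w) ^ 2 * ‖𝓕 f w‖ := by
    rw [Real.fourier_deriv hf'i hf'' hf''i, Real.fourier_deriv hf hf' hf'i, norm_smul, norm_smul,
      ← mul_assoc, ← sq]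
    simp [abs_of_pos pi_pos, mul_pow]
  rw [add_mul, one_mul, ← hnorm]
  exact add_le_add (norm_fourier_le_integral_norm f w) (norm_fourier_le_integral_norm _ w)

theorem Real.integrable_fourier_of_deriv_deriv {f : ℝ → E} (hf : Integrable f)
    (hf' : Differentiable ℝ f) (hf'i : Integrable (deriv f))
    (hf'' : Differentiable ℝ (deriv f)) (hf''i : Integrable (deriv (deriv f))) :
    Integrable (𝓕 f) := by
  have hcont : Continuous (𝓕 f) := VectorFourier.fourierIntegral_continuous
    Real.continuous_fourierChar (innerSL ℝ).continuous₂ hf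
  have hdecay : Integrable fun w : ℝ => (1 + (2 * π * w) ^ 2)⁻¹ :=
    integrable_inv_one_add_sq.comp_mul_left' (by positivity)
  refine (hdecay.const_mul ((∫ x, ‖f x‖) + ∫ x, ‖deriv (deriv f) x‖)).mono'
    hcont.aestronglyMeasurable (ae_of_all _ fun w => ?_)
  rw [← div_eq_mul_inv, le_div_iff₀' (by positivity)]
  exact one_add_sq_mul_norm_fourier_le hf hf' hf'i hf'' hf''i w

end Fourier

theorem Real.integral_cexp_mul_eq_fourierInv (f : ℝ → ℂ) (t : ℝ) :
    ∫ s : ℝ, cexp (I * t * s) * f s = 𝓕⁻ f (t / (2 * π)) := by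
  rw [Real.fourierInv_eq']
  refine integral_congr_ae (ae_of_all _ fun s => ?_)
  dsimp only
  rw [smul_eq_mul]
  congr 2
  simp only [RCLike.inner_apply, conj_trivial]
  push_cast
  field_simp

theorem Real.integral_integral_cexp_mul_mul_cexp {f : ℝ → ℂ} (hf : Integrable f)
    (hFf : Integrable (𝓕 f)) {ξ : ℝ} (hξ : ContinuousAt f ξ) :
    ∫ t : ℝ, (∫ s : ℝ, cexp (I * t * s) * f s) * cexp (-I * ξ * t) = 2 * π * f ξ := by
  simp_rw [integral_cexp_mul_eq_fourierInv]
  have hscale := Measure.integral_comp_mul_left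
    (fun t : ℝ => 𝓕⁻ f (t / (2 * π)) * cexp (-I * ξ * t)) (2 * π)
  rw [abs_of_pos (by positivity), eq_inv_smul_iff₀ (by positivity)] at hscale
  rw [← hscale, ← hf.fourier_fourierInv_eq hFf hξ, Real.fourier_real_eq_integral_exp_smul,
    Complex.real_smul]
  push_cast
  congr 1
  refine integral_congr_ae (ae_of_all _ fun x => ?_)
  dsimp only
  rw [smul_eq_mul, mul_div_cancel_left₀ _ (by positivity), mul_comm]
  congr 2
  ring

/-- `Real.sigmoid' = sigmoid * (1 - sigmoid)`, the density of the logistic distribution. -/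
noncomputable def logisticDensity (s : ℝ) : ℝ := sigmoid s * (1 - sigmoid s)

lemma logisticDensity_pos (s : ℝ) : 0 < logisticDensity s :=
  mul_pos (sigmoid_pos s) (sub_pos.2 (sigmoid_lt_one s))

lemma logisticDensity_le_one_div_four (s : ℝ) : logisticDensity s ≤ 1 / 4 := by
  unfold logisticDensity; nlinarith [sq_nonneg (sigmoid s - 1 / 2)]

lemma abs_one_sub_two_mul_sigmoid_le (s : ℝ) : |1 - 2 * sigmoid s| ≤ 1 :=
  abs_le.2 ⟨by linarith [sigmoid_lt_one s], by linarith [sigmoid_pos s]⟩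

lemma hasDerivAt_logisticDensity (s : ℝ) :
    HasDerivAt logisticDensity ((1 - 2 * sigmoid s) * logisticDensity s) s := by
  have h := hasDerivAt_sigmoid s
  exact (h.mul (h.const_sub 1)).congr_deriv (by unfold logisticDensity; ring)

lemma log_sigmoid_sub_log_one_sub_sigmoid (s : ℝ) :
    Real.log (sigmoid s) - Real.log (1 - sigmoid s) = s := by
  rw [← sigmoid_neg, ← sigmoid_mul_rexp_neg, Real.log_mul (sigmoid_pos s).ne' (exp_pos _).ne',
    Real.log_exp]
  ring

lemma logisticDensity_eq_inv_two_mul_cosh_sq (s : ℝ) :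
    logisticDensity s = ((2 * Real.cosh (s / 2)) ^ 2)⁻¹ := by
  have hcosh : (2 * Real.cosh (s / 2)) ^ 2 = (1 + rexp (-s)) * (1 + rexp s) := by
    rw [Real.cosh_eq, Real.exp_neg, Real.exp_neg]
    have h := Real.exp_add (s / 2) (s / 2)
    rw [add_halves] at h
    field_simp
    rw [h]
    ring
  rw [logisticDensity, ← sigmoid_neg, sigmoid_def, sigmoid_def, neg_neg, hcosh, mul_inv]

lemma ofReal_cpow_add_mul_ofReal_cpow_sub {x y : ℝ} (hx : 0 < x) (hy : 0 < y) (a t : ℝ) :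
    (x : ℂ) ^ ((a : ℂ) + I * t) * (y : ℂ) ^ ((a : ℂ) - I * t)
      = cexp (I * t * (Real.log x - Real.log y : ℝ)) * ((x * y) ^ a : ℝ) := by
  rw [cpow_def_of_ne_zero (ofReal_ne_zero.2 hx.ne'), cpow_def_of_ne_zero (ofReal_ne_zero.2 hy.ne'),
    Real.rpow_def_of_pos (mul_pos hx hy), Real.log_mul hx.ne' hy.ne', ← ofReal_log hx.le,
    ← ofReal_log hy.le, ofReal_exp, ← Complex.exp_add, ← Complex.exp_add]
  congr 1
  push_cast
  ring

lemma abs_logisticDensity_smul_betaIntegrand (u v : ℂ) (s : ℝ) :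
    |logisticDensity s| • ((sigmoid s : ℂ) ^ (u - 1) * (1 - (sigmoid s : ℂ)) ^ (v - 1))
      = (sigmoid s : ℂ) ^ u * (1 - (sigmoid s : ℂ)) ^ v := by
  have hx : (sigmoid s : ℂ) ≠ 0 := ofReal_ne_zero.2 (sigmoid_pos s).ne'
  have hy : 1 - (sigmoid s : ℂ) ≠ 0 := by
    rw [← ofReal_one, ← ofReal_sub]; exact ofReal_ne_zero.2 (sub_pos.2 (sigmoid_lt_one s)).ne'
  rw [abs_of_pos (logisticDensity_pos s), logisticDensity, real_smul, cpow_sub _ _ hx,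
    cpow_sub _ _ hy, cpow_one, cpow_one]
  push_cast
  field_simp

lemma image_sigmoid_univ : sigmoid '' Set.univ = Set.Ioo 0 1 := by
  rw [Set.image_univ, range_sigmoid]

lemma integrableOn_betaIntegrand_iff (u v : ℂ) :
    IntegrableOn (fun x : ℝ => (x : ℂ) ^ (u - 1) * (1 - (x : ℂ)) ^ (v - 1)) (Set.Ioo 0 1) ↔
      Integrable fun s => (sigmoid s : ℂ) ^ u * (1 - (sigmoid s : ℂ)) ^ v := by
  rw [← image_sigmoid_univ, integrableOn_image_iff_integrableOn_abs_deriv_smul MeasurableSet.univ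
    (fun s _ => (hasDerivAt_sigmoid s).hasDerivWithinAt) sigmoid_injective.injOn]
  simp_rw [integrableOn_univ]
  exact integrable_congr (ae_of_all _ (abs_logisticDensity_smul_betaIntegrand u v))

lemma betaIntegral_eq_integral_sigmoid (u v : ℂ) :
    betaIntegral u v = ∫ s, (sigmoid s : ℂ) ^ u * (1 - (sigmoid s : ℂ)) ^ v := by
  rw [betaIntegral, intervalIntegral.integral_of_le zero_le_one, integral_Ioc_eq_integral_Ioo,
    ← image_sigmoid_univ, integral_image_eq_integral_abs_deriv_smul MeasurableSet.univ
      (fun s _ => (hasDerivAt_sigmoid s).hasDerivWithinAt) sigmoid_injective.injOn,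
    setIntegral_univ]
  exact integral_congr_ae (ae_of_all _ (abs_logisticDensity_smul_betaIntegrand u v))

lemma sigmoid_cpow_mul_one_sub_sigmoid_cpow (a t s : ℝ) :
    (sigmoid s : ℂ) ^ ((a : ℂ) + I * t) * (1 - (sigmoid s : ℂ)) ^ ((a : ℂ) - I * t)
      = cexp (I * t * s) * (logisticDensity s ^ a : ℝ) := by
  rw [← ofReal_one, ← ofReal_sub, ofReal_cpow_add_mul_ofReal_cpow_sub (sigmoid_pos s)
    (sub_pos.2 (sigmoid_lt_one s)), log_sigmoid_sub_log_one_sub_sigmoid, logisticDensity]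

lemma betaIntegral_eq_integral_cexp_mul (a t : ℝ) :
    betaIntegral ((a : ℂ) + I * t) ((a : ℂ) - I * t)
      = ∫ s : ℝ, cexp (I * t * s) * (logisticDensity s ^ a : ℝ) := by
  simp_rw [betaIntegral_eq_integral_sigmoid, sigmoid_cpow_mul_one_sub_sigmoid_cpow]

lemma integrable_logisticDensity_rpow {a : ℝ} (ha : 0 < a) :
    Integrable fun s => logisticDensity s ^ a := by
  -- the substituted Beta integrand at `t = 0`, i.e. for the convergent integral `B(a, a)`
  have hre : 0 < ((a : ℂ) + I * (0 : ℝ)).re ∧ 0 < ((a : ℂ) - I * (0 : ℝ)).re := by simpa using ha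
  have h := (integrableOn_betaIntegrand_iff _ _).1
    ((betaIntegral_convergent hre.1 hre.2).1.mono_set Set.Ioo_subset_Ioc_self)
  simp_rw [sigmoid_cpow_mul_one_sub_sigmoid_cpow] at h
  simpa using h.re

lemma hasDerivAt_logisticDensity_rpow (a s : ℝ) :
    HasDerivAt (fun s => logisticDensity s ^ a)
      (a * (1 - 2 * sigmoid s) * logisticDensity s ^ a) s := by
  have hw := logisticDensity_pos s
  refine ((hasDerivAt_logisticDensity s).rpow_const (Or.inl hw.ne')).congr_deriv ?_
  rw [Real.rpow_sub_one hw.ne']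
  field_simp

lemma hasDerivAt_mul_logisticDensity_rpow (a s : ℝ) :
    HasDerivAt (fun s => a * (1 - 2 * sigmoid s) * logisticDensity s ^ a)
      (a * (a * (1 - 2 * sigmoid s) ^ 2 - 2 * logisticDensity s) * logisticDensity s ^ a) s := by
  refine ((((hasDerivAt_sigmoid s).const_mul 2).const_sub 1).const_mul a |>.mul
    (hasDerivAt_logisticDensity_rpow a s)).congr_deriv ?_
  rw [logisticDensity]
  ring

lemma integrable_fourier_logisticDensity_rpow {a : ℝ} (ha : 0 < a) :
    Integrable (𝓕 fun s => ((logisticDensity s ^ a : ℝ) : ℂ)) := by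
  have hw := integrable_logisticDensity_rpow ha
  have hd₁ : deriv (fun s => ((logisticDensity s ^ a : ℝ) : ℂ)) =
      fun s => ((a * (1 - 2 * sigmoid s) * logisticDensity s ^ a : ℝ) : ℂ) :=
    funext fun s => (hasDerivAt_logisticDensity_rpow a s).ofReal_comp.deriv
  have hd₂ : deriv (fun s => ((a * (1 - 2 * sigmoid s) * logisticDensity s ^ a : ℝ) : ℂ)) =
      fun s => ((a * (a * (1 - 2 * sigmoid s) ^ 2 - 2 * logisticDensity s) *
        logisticDensity s ^ a : ℝ) : ℂ) :=
    funext fun s => (hasDerivAt_mul_logisticDensity_rpow a s).ofReal_comp.deriv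
  refine Real.integrable_fourier_of_deriv_deriv hw.ofReal
    (fun s => (hasDerivAt_logisticDensity_rpow a s).ofReal_comp.differentiableAt) ?_ ?_ ?_
  · rw [hd₁]
    refine (hw.bdd_mul (c := a) (by fun_prop) (ae_of_all _ fun s => ?_)).ofReal
    rw [norm_mul, Real.norm_of_nonneg ha.le]
    exact mul_le_of_le_one_right ha.le (abs_one_sub_two_mul_sigmoid_le s)
  · rw [hd₁]
    exact fun s => (hasDerivAt_mul_logisticDensity_rpow a s).ofReal_comp.differentiableAt
  · rw [hd₁, hd₂]
    refine (hw.bdd_mul (c := a * (a + 1 / 2)) (by unfold logisticDensity; fun_prop)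
      (ae_of_all _ fun s => ?_)).ofReal
    rw [norm_mul, Real.norm_of_nonneg ha.le]
    refine mul_le_mul_of_nonneg_left (abs_le.2 ⟨?_, ?_⟩) ha.le
    · nlinarith [logisticDensity_le_one_div_four s, sq_nonneg (1 - 2 * sigmoid s)]
    · nlinarith [logisticDensity_pos s, (sq_le_one_iff_abs_le_one _).2
        (abs_one_sub_two_mul_sigmoid_le s)]

lemma Gamma_mul_Gamma_eq_integral_cexp_mul {a : ℝ} (ha : 0 < a) (t : ℝ) :
    Complex.Gamma (a + I * t) * Complex.Gamma (a - I * t)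
      = Complex.Gamma (2 * a) * ∫ s : ℝ, cexp (I * t * s) * (logisticDensity s ^ a : ℝ) := by
  rw [Gamma_mul_Gamma_eq_betaIntegral (by simpa using ha) (by simpa using ha),
    betaIntegral_eq_integral_cexp_mul]
  ring_nf

lemma ofReal_norm_Gamma_sq (a t : ℝ) :
    ((‖Complex.Gamma (a + I * t)‖ ^ 2 : ℝ) : ℂ)
      = Complex.Gamma (a + I * t) * Complex.Gamma (a - I * t) := by
  have hconj : (starRingEnd ℂ) (a + I * t) = a - I * t := by simp [sub_eq_add_neg]
  rw [ofReal_pow, ← mul_conj', ← Complex.Gamma_conj, hconj]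

lemma logisticDensity_rpow_eq (a s : ℝ) :
    logisticDensity s ^ a = 2 ^ (-(2 * a)) * Real.cosh (s / 2) ^ (-(2 * a)) := by
  have hc := Real.cosh_pos (s / 2)
  rw [logisticDensity_eq_inv_two_mul_cosh_sq, Real.inv_rpow (by positivity), ← Real.rpow_natCast,
    ← Real.rpow_mul (by positivity), ← Real.rpow_neg (by positivity),
    Real.mul_rpow zero_le_two hc.le]
  norm_num

lemma sqrt_pi_mul_Gamma_mul_Gamma_add_half (a : ℝ) :
    √π * Real.Gamma a * Real.Gamma (a + 1 / 2) = 2 * π * Real.Gamma (2 * a) * 2 ^ (-(2 * a)) := by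
  rw [mul_assoc, Real.Gamma_mul_Gamma_add_half, show 1 - 2 * a = 1 + -(2 * a) by ring,
    Real.rpow_add two_pos, Real.rpow_one]
  linear_combination (2 * Real.Gamma (2 * a) * 2 ^ (-(2 * a))) * Real.mul_self_sqrt pi_pos.le

theorem ramanujan_formula_real (a : ℝ) (ha : 0 < a) (ξ : ℝ) :
    ∫ t : ℝ, ((‖Complex.Gamma (a + Complex.I * t)‖ ^ 2 : ℝ) : ℂ) *
        Complex.exp (-Complex.I * ξ * t) =
      ((Real.sqrt Real.pi * Real.Gamma a * Real.Gamma (a + 1 / 2) *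
        Real.cosh (ξ / 2) ^ (-(2 * a)) : ℝ) : ℂ) := by
  calc _ = ∫ t : ℝ, Complex.Gamma (2 * a) * ((∫ s : ℝ, cexp (I * t * s) *
        (logisticDensity s ^ a : ℝ)) * cexp (-I * ξ * t)) := by
        simp_rw [ofReal_norm_Gamma_sq, Gamma_mul_Gamma_eq_integral_cexp_mul ha, mul_assoc]
    _ = Complex.Gamma (2 * a) * (2 * π * (logisticDensity ξ ^ a : ℝ)) := by
        rw [integral_const_mul]
        exact congrArg _ (Real.integral_integral_cexp_mul_mul_cexp
          (integrable_logisticDensity_rpow ha).ofReal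
          (integrable_fourier_logisticDensity_rpow ha)
          (hasDerivAt_logisticDensity_rpow a ξ).ofReal_comp.continuousAt)
    _ = _ := by
        rw [show (2 * a : ℂ) = (2 * a : ℝ) by push_cast; ring, Complex.Gamma_ofReal,
          sqrt_pi_mul_Gamma_mul_Gamma_add_half, logisticDensity_rpow_eq]
        push_cast
        ring
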